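/- Multiplexed RollPE is not relative in general: there exist n ≥ 2, vectors q^{(1)}, q^{(2)}, k^{(1)}, k^{(2)} ∈ ℝ^n, and positions p_q, p_k, t ∈ ℤ such that ⟨Σ_w S^{w·(p_q+t)} q^{(w)}, Σ_w S^{w·(p_k+t)} k^{(w)}⟩ ≠ ⟨Σ_w S^{w·p_q} q^{(w)}, Σ_w S^{w·p_k} k^{(w)}⟩, where the sums range over w ∈ {1, 2}. -/
import Mathlib


open Matrix

/-- The `n × n` cyclic shift matrix: `S i j = 1` if `j = i + 1 (mod n)`. -/
def cyclicShift (n : ℕ) : Matrix (Fin n) (Fin n) ℝ :=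
  fun i j => if (j : ℕ) = ((i : ℕ) + 1) % n then 1 else 0

/-- Multiplexed RollPE with two components is not relative in general: there exist
`n ≥ 2`, vectors, and positions such that translating both positions by `t` changes
the attention score. -/
theorem multiplexedRollPE_not_relative :
    ∃ (n : ℕ) (q1 q2 k1 k2 : Fin n → ℝ) (pq pk t : ℤ), 2 ≤ n ∧
      ((cyclicShift n ^ (1 * (pq + t))) *ᵥ q1 + (cyclicShift n ^ (2 * (pq + t))) *ᵥ q2) ⬝ᵥ
        ((cyclicShift n ^ (1 * (pk + t))) *ᵥ k1 + (cyclicShift n ^ (2 * (pk + t))) *ᵥ k2) ≠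
      ((cyclicShift n ^ (1 * pq)) *ᵥ q1 + (cyclicShift n ^ (2 * pq)) *ᵥ q2) ⬝ᵥ
        ((cyclicShift n ^ (1 * pk)) *ᵥ k1 + (cyclicShift n ^ (2 * pk)) *ᵥ k2) := by
  refine ⟨2, ![1,0], ![1,0], ![1,0], ![1,0], 0, 0, 1, le_refl 2, ?_⟩
  have h2 : cyclicShift 2 ^ (2 : ℤ) = cyclicShift 2 * cyclicShift 2 := by
    rw [show (2:ℤ) = ((2:ℕ):ℤ) from rfl, zpow_natCast, pow_two]
  norm_num [h2, zpow_one, cyclicShift, Matrix.mulVec, dotProduct,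
    Fin.sum_univ_two, Matrix.mul_apply]
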